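/- Let m, n ≥ 1, let G = G_{m×n} be the grid graph, let d = gcd(m+1, n+1), and let v = (a,b) be a vertex of G. If d does not divide a and d does not divide b, then the undirected edge geography position (G, v) is a P-position. -/

import Mathlib

/-- P-positions of undirected edge geography on the edge set `F` with root `v`:
every move (removing an edge `s(v,w) ∈ F` and moving the root to `w`)
leads to a position that is not a P-position. -/
def UegPPos {V : Type} [DecidableEq V] (F : Finset (Sym2 V)) (v : V) : Prop :=
  ∀ w : V, ∀ h : s(v, w) ∈ F, ¬ UegPPos (F.erase s(v, w)) w
termination_by F.card
decreasing_by exact Finset.card_erase_lt_of_mem h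

/-- N-positions of undirected edge geography: some move leads to a P-position. -/
def UegNPos {V : Type} [DecidableEq V] (F : Finset (Sym2 V)) (v : V) : Prop :=
  ∃ w : V, ∃ _ : s(v, w) ∈ F, UegPPos (F.erase s(v, w)) w

/-- The grid graph `G_{m×n}`: the vertex `(i, j)` of the grid (with `1 ≤ i ≤ m`,
`1 ≤ j ≤ n`) is encoded as the pair `(⟨i-1, _⟩, ⟨j-1, _⟩) : Fin m × Fin n`;
two vertices `(i,j)` and `(i',j')` are adjacent iff `|i-i'| + |j-j'| = 1`. -/
def gridGraph (m n : ℕ) : SimpleGraph (Fin m × Fin n) where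
  Adj p q := ((p.1.val : ℤ) - q.1.val).natAbs + ((p.2.val : ℤ) - q.2.val).natAbs = 1
  symm := by constructor; intro p q h; omega
  loopless := by constructor; intro p h; omega

instance (m n : ℕ) : DecidableRel (gridGraph m n).Adj := fun p q =>
  inferInstanceAs
    (Decidable (((p.1.val : ℤ) - q.1.val).natAbs + ((p.2.val : ℤ) - q.2.val).natAbs = 1))

/-- An even kernel of a simple graph: a nonempty independent set `S` such that every
vertex not in `S` has an even number of neighbors in `S`. -/
def IsEvenKernel {V : Type} (G : SimpleGraph V) (S : Set V) : Prop :=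
  S.Nonempty ∧ (∀ u ∈ S, ∀ w ∈ S, ¬ G.Adj u w) ∧
    ∀ u, u ∉ S → Even {w | w ∈ S ∧ G.Adj u w}.ncard

/-!
An even kernel of the remaining graph containing the root makes the position a P-position:
a move from a kernel vertex leaves the kernel (independence) and reaches a vertex with an
even, hence at least one more, number of remaining edges into the kernel; answering along
such an edge restores the invariant.

For the grid, with `(a, b)` the root in 1-based coordinates and `c = a - b`, take the vertices
`(x, y)` for which exactly one of `x - y`, `x + y` is `≡ ±c (mod 2d)`. Such a condition
forces `x - y ≡ c (mod 2)`, so the set is independent. Each of `x - y ± 1`, `x + y ± 1` is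
shared by exactly two of the four lattice neighbours of `(x, y)`, so every lattice point has
an even number of neighbours in the set. On the lines `x = 0`, `y = 0`, `x = m + 1`,
`y = n + 1` the numbers `x - y` and `x + y` agree up to sign modulo `2d` (as `d` divides
`m + 1` and `n + 1`), so the set misses them, and grid and lattice neighbour counts agree.
Finally `a + b ≡ ±(a - b) (mod 2d)` would mean `d ∣ b` or `d ∣ a`, so the root lies in the set.
-/

section EvenKernel

variable {V : Type} [DecidableEq V]

theorem Finset.filter_mem_erase_sym2 (S : Finset V) (F : Finset (Sym2 V)) (x y₀ : V) :
    S.filter (fun y => s(x, y) ∈ F.erase s(x, y₀)) =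
      (S.filter fun y => s(x, y) ∈ F).erase y₀ := by
  ext y
  simp only [Finset.mem_filter, Finset.mem_erase, ne_eq, Sym2.congr_right]
  tauto

theorem Finset.filter_mem_erase_sym2_of_ne {S : Finset V} (F : Finset (Sym2 V)) {x w : V}
    (t : V) (hx : x ≠ w) (hw : w ∉ S) :
    S.filter (fun y => s(x, y) ∈ F.erase s(w, t)) = S.filter fun y => s(x, y) ∈ F := by
  refine Finset.filter_congr fun y hy => ?_
  have hne : s(x, y) ≠ s(w, t) := by
    rw [Ne, Sym2.eq_iff]
    rintro (⟨rfl, -⟩ | ⟨-, rfl⟩)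
    exacts [hx rfl, hw hy]
  simp only [Finset.mem_erase, ne_eq, hne, not_false_eq_true, true_and]

theorem uegPPos_of_evenKernel (S : Finset V) {F : Finset (Sym2 V)} {v : V} (hv : v ∈ S)
    (hind : ∀ x ∈ S, ∀ y ∈ S, s(x, y) ∉ F)
    (heven : ∀ x ∉ S, Even (S.filter fun y => s(x, y) ∈ F).card) :
    UegPPos F v := by
  induction F using Finset.strongInduction generalizing v with
  | H F ih =>
    rw [UegPPos]
    intro w hvw hP
    have hw : w ∉ S := fun hw => hind v hv w hw hvw
    set T := S.filter fun y => s(w, y) ∈ F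
    have hvT : v ∈ T := Finset.mem_filter.mpr ⟨hv, by rwa [Sym2.eq_swap]⟩
    obtain ⟨k, hk⟩ : Even T.card := heven w hw
    rw [Sym2.eq_swap] at hP hvw
    set F' := F.erase s(w, v)
    have hT' : S.filter (fun y => s(w, y) ∈ F') = T.erase v :=
      Finset.filter_mem_erase_sym2 S F w v
    obtain ⟨u, hu⟩ : (T.erase v).Nonempty := by
      rw [← Finset.card_pos, Finset.card_erase_of_mem hvT]
      have := Finset.card_pos.mpr ⟨v, hvT⟩
      omega
    obtain ⟨huS, hwu⟩ := Finset.mem_filter.mp (hT' ▸ hu)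
    rw [UegPPos] at hP
    refine hP u hwu (ih _ ((Finset.erase_subset _ _).trans_ssubset (Finset.erase_ssubset hvw))
      huS (fun x hx y hy hxy => hind x hx y hy ?_) fun x hx => ?_)
    · exact Finset.mem_of_mem_erase (Finset.mem_of_mem_erase hxy)
    by_cases hxw : x = w
    · subst hxw
      rw [Finset.filter_mem_erase_sym2, hT', Finset.card_erase_of_mem hu,
        Finset.card_erase_of_mem hvT]
      exact ⟨k - 1, by omega⟩
    · rw [Finset.filter_mem_erase_sym2_of_ne _ _ hxw hw,
        Finset.filter_mem_erase_sym2_of_ne _ _ hxw hw]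
      exact heven x hx

theorem uegPPos_edgeFinset_of_isEvenKernel [Fintype V] (G : SimpleGraph V) [DecidableRel G.Adj]
    {S : Set V} (hS : IsEvenKernel G S) {v : V} (hv : v ∈ S) :
    UegPPos G.edgeFinset v := by
  classical
  obtain ⟨-, hind, heven⟩ := hS
  refine uegPPos_of_evenKernel S.toFinset (Set.mem_toFinset.mpr hv)
    (fun x hx y hy hxy => hind x (by simpa using hx) y (by simpa using hy) (by simpa using hxy))
    fun x hx => ?_
  convert heven x (by simpa using hx) using 1
  rw [Set.ncard_eq_toFinset_card']
  congr 1
  ext y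
  simp

end EvenKernel

section DiagKernel

def ModEqPm (D c z : ℤ) : Prop := z ≡ c [ZMOD D] ∨ z ≡ -c [ZMOD D]

variable {D c : ℤ}

theorem modEqPm_neg {z : ℤ} : ModEqPm D c (-z) ↔ ModEqPm D c z := by
  have h : -z ≡ c [ZMOD D] ↔ z ≡ -c [ZMOD D] := by rw [← Int.neg_modEq_neg, neg_neg]
  rw [ModEqPm, ModEqPm, h, Int.neg_modEq_neg, or_comm]

theorem modEqPm_add_of_dvd {z t : ℤ} (ht : D ∣ t) : ModEqPm D c (z + t) ↔ ModEqPm D c z := by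
  have h : z + t ≡ z [ZMOD D] := by simpa using (Int.modEq_zero_iff_dvd.mpr ht).add_left z
  exact or_congr ⟨h.symm.trans, h.trans⟩ ⟨h.symm.trans, h.trans⟩

theorem ModEqPm.modEq_two (hD : 2 ∣ D) {z : ℤ} (h : ModEqPm D c z) : z ≡ c [ZMOD 2] := by
  rcases h with h | h
  · exact h.of_dvd hD
  · exact (h.of_dvd hD).trans (by unfold Int.ModEq; omega)

def diagKernel (D c : ℤ) : Set (ℤ × ℤ) :=
  {z | Xor (ModEqPm D c (z.1 - z.2)) (ModEqPm D c (z.1 + z.2))}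

theorem mk_mem_diagKernel {x y : ℤ} :
    (x, y) ∈ diagKernel D c ↔ ¬(ModEqPm D c (x - y) ↔ ModEqPm D c (x + y)) :=
  xor_iff_not_iff _ _

theorem zero_mk_notMem_diagKernel (y : ℤ) : ((0 : ℤ), y) ∉ diagKernel D c := by
  rw [mk_mem_diagKernel, zero_sub, zero_add, modEqPm_neg, not_not]

theorem mk_zero_notMem_diagKernel (x : ℤ) : (x, (0 : ℤ)) ∉ diagKernel D c := by
  rw [mk_mem_diagKernel, sub_zero, add_zero, not_not]

theorem mk_notMem_diagKernel_of_dvd_fst {M : ℤ} (hM : D ∣ 2 * M) (y : ℤ) :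
    (M, y) ∉ diagKernel D c := by
  rw [mk_mem_diagKernel, not_not, show M + y = -(M - y) + 2 * M by ring,
    modEqPm_add_of_dvd hM, modEqPm_neg]

theorem mk_notMem_diagKernel_of_dvd_snd {N : ℤ} (hN : D ∣ 2 * N) (x : ℤ) :
    (x, N) ∉ diagKernel D c := by
  rw [mk_mem_diagKernel, not_not, show x + N = (x - N) + 2 * N by ring, modEqPm_add_of_dvd hN]

theorem sub_modEq_two_of_mem_diagKernel (hD : 2 ∣ D) {z : ℤ × ℤ} (hz : z ∈ diagKernel D c) :
    z.1 - z.2 ≡ c [ZMOD 2] := by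
  rcases hz with ⟨h, -⟩ | ⟨h, -⟩
  · exact h.modEq_two hD
  · exact (show z.1 - z.2 ≡ z.1 + z.2 [ZMOD 2] by unfold Int.ModEq; omega).trans
      (h.modEq_two hD)

def IntGridAdj (z w : ℤ × ℤ) : Prop := (z.1 - w.1).natAbs + (z.2 - w.2).natAbs = 1

theorem not_intGridAdj_of_mem_diagKernel (hD : 2 ∣ D) {z w : ℤ × ℤ}
    (hz : z ∈ diagKernel D c) (hw : w ∈ diagKernel D c) : ¬IntGridAdj z w := by
  have hz2 := sub_modEq_two_of_mem_diagKernel hD hz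
  have hw2 := sub_modEq_two_of_mem_diagKernel hD hw
  unfold Int.ModEq at hz2 hw2
  unfold IntGridAdj
  omega

theorem intGridAdj_mk_iff {x y : ℤ} {w : ℤ × ℤ} :
    IntGridAdj (x, y) w ↔
      w ∈ ({(x + 1, y), (x - 1, y), (x, y + 1), (x, y - 1)} : Finset (ℤ × ℤ)) := by
  simp only [IntGridAdj, Finset.mem_insert, Finset.mem_singleton, Prod.ext_iff]
  omega

theorem even_xor_count (A B E G : Prop) [Decidable A] [Decidable B] [Decidable E]
    [Decidable G] :
    Even ((if Xor A E then 1 else 0) + ((if Xor B G then 1 else 0) +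
      ((if Xor B E then 1 else 0) + (if Xor A G then 1 else 0)))) := by
  by_cases A <;> by_cases B <;> by_cases E <;> by_cases G <;> simp [*] <;> decide

theorem even_ncard_diagKernel_inter_intGridAdj (z : ℤ × ℤ) :
    Even {w | w ∈ diagKernel D c ∧ IntGridAdj z w}.ncard := by
  classical
  obtain ⟨x, y⟩ := z
  have hset : {w | w ∈ diagKernel D c ∧ IntGridAdj (x, y) w} =
      ↑(({(x + 1, y), (x - 1, y), (x, y + 1), (x, y - 1)} : Finset (ℤ × ℤ)).filter
        (· ∈ diagKernel D c)) := by
    ext w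
    rw [Finset.coe_filter, Set.mem_ofPred, Set.mem_ofPred, intGridAdj_mk_iff, and_comm]
  rw [hset, Set.ncard_coe_finset, Finset.card_filter,
    Finset.sum_insert (by simp [Prod.ext_iff]; omega), Finset.sum_insert (by simp [Prod.ext_iff]),
    Finset.sum_insert (by simp [Prod.ext_iff]; omega), Finset.sum_singleton]
  simp only [diagKernel, Set.mem_ofPred_eq,
    show x + 1 - y = x - y + 1 by ring, show x + 1 + y = x + y + 1 by ring,
    show x - 1 - y = x - y - 1 by ring, show x - 1 + y = x + y - 1 by ring,
    show x - (y + 1) = x - y - 1 by ring, show x + (y + 1) = x + y + 1 by ring,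
    show x - (y - 1) = x - y + 1 by ring, show x + (y - 1) = x + y - 1 by ring]
  exact even_xor_count _ _ _ _

theorem mk_mem_diagKernel_sub {d a b : ℤ} (ha : ¬d ∣ a) (hb : ¬d ∣ b) :
    (a, b) ∈ diagKernel (2 * d) (a - b) := by
  have hadd : ¬ModEqPm (2 * d) (a - b) (a + b) := by
    rintro (h | h) <;> rw [Int.modEq_iff_dvd] at h
    · rw [show a - b - (a + b) = 2 * -b by ring, mul_dvd_mul_iff_left two_ne_zero,
        dvd_neg] at h
      exact hb h
    · rw [show -(a - b) - (a + b) = 2 * -a by ring, mul_dvd_mul_iff_left two_ne_zero,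
        dvd_neg] at h
      exact ha h
  exact mk_mem_diagKernel.mpr fun h => hadd (h.mp (Or.inl rfl))

end DiagKernel

section Grid

variable {m n : ℕ}

def gridCoord (m n : ℕ) (q : Fin m × Fin n) : ℤ × ℤ := ((q.1 : ℤ) + 1, (q.2 : ℤ) + 1)

theorem gridCoord_injective : Function.Injective (gridCoord m n) := by
  intro p q h
  simp only [gridCoord, Prod.ext_iff, add_left_inj, Nat.cast_inj, Fin.val_inj] at h
  exact Prod.ext h.1 h.2

theorem gridGraph_adj_iff {p q : Fin m × Fin n} :
    (gridGraph m n).Adj p q ↔ IntGridAdj (gridCoord m n p) (gridCoord m n q) := by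
  simp only [gridGraph, IntGridAdj, gridCoord, add_sub_add_right_eq_sub]

theorem mem_range_gridCoord {z : ℤ × ℤ} :
    z ∈ Set.range (gridCoord m n) ↔ 1 ≤ z.1 ∧ z.1 ≤ m ∧ 1 ≤ z.2 ∧ z.2 ≤ n := by
  constructor
  · rintro ⟨q, rfl⟩
    simp only [gridCoord]
    omega
  · rintro ⟨h1, h2, h3, h4⟩
    refine ⟨(⟨(z.1 - 1).toNat, by omega⟩, ⟨(z.2 - 1).toNat, by omega⟩), ?_⟩
    simp only [gridCoord, Prod.ext_iff]
    omega

theorem diagKernel_inter_intGridAdj_subset_range {d c : ℤ} (hm : d ∣ (m : ℤ) + 1)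
    (hn : d ∣ (n : ℤ) + 1) (p : Fin m × Fin n) :
    {z | z ∈ diagKernel (2 * d) c ∧ IntGridAdj (gridCoord m n p) z} ⊆
      Set.range (gridCoord m n) := by
  rintro ⟨x, y⟩ ⟨hz, hadj⟩
  have hx₀ : x ≠ 0 := by rintro rfl; exact zero_mk_notMem_diagKernel y hz
  have hy₀ : y ≠ 0 := by rintro rfl; exact mk_zero_notMem_diagKernel x hz
  have hx₁ : x ≠ m + 1 := by
    rintro rfl; exact mk_notMem_diagKernel_of_dvd_fst (mul_dvd_mul_left 2 hm) y hz
  have hy₁ : y ≠ n + 1 := by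
    rintro rfl; exact mk_notMem_diagKernel_of_dvd_snd (mul_dvd_mul_left 2 hn) x hz
  have := p.1.isLt
  have := p.2.isLt
  simp only [IntGridAdj, gridCoord] at hadj
  rw [mem_range_gridCoord]
  omega

theorem isEvenKernel_preimage_diagKernel {d c : ℤ} (hm : d ∣ (m : ℤ) + 1)
    (hn : d ∣ (n : ℤ) + 1) {v : Fin m × Fin n} (hv : gridCoord m n v ∈ diagKernel (2 * d) c) :
    IsEvenKernel (gridGraph m n) (gridCoord m n ⁻¹' diagKernel (2 * d) c) := by
  refine ⟨⟨v, hv⟩, fun p hp q hq hpq => not_intGridAdj_of_mem_diagKernel (dvd_mul_right 2 d)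
    hp hq (gridGraph_adj_iff.mp hpq), fun p _ => ?_⟩
  have hset : {q | q ∈ gridCoord m n ⁻¹' diagKernel (2 * d) c ∧ (gridGraph m n).Adj p q} =
      gridCoord m n ⁻¹' {z | z ∈ diagKernel (2 * d) c ∧ IntGridAdj (gridCoord m n p) z} := by
    ext q
    simp only [Set.mem_preimage, Set.mem_ofPred_eq, gridGraph_adj_iff]
  rw [hset, Set.ncard_preimage_of_injective_subset_range gridCoord_injective
    (diagKernel_inter_intGridAdj_subset_range hm hn p)]
  exact even_ncard_diagKernel_inter_intGridAdj _

end Grid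

theorem ueg_grid_ppos_general (m n : ℕ)
    (d : ℕ) (hd : d = Nat.gcd (m + 1) (n + 1)) (v : Fin m × Fin n)
    (ha : ¬ d ∣ (v.1.val + 1)) (hb : ¬ d ∣ (v.2.val + 1)) :
    UegPPos (gridGraph m n).edgeFinset v := by
  have hm : (d : ℤ) ∣ (m : ℤ) + 1 := by exact_mod_cast hd ▸ Nat.gcd_dvd_left _ _
  have hn : (d : ℤ) ∣ (n : ℤ) + 1 := by exact_mod_cast hd ▸ Nat.gcd_dvd_right _ _
  have hv : gridCoord m n v ∈ diagKernel (2 * d) ((v.1 : ℤ) + 1 - ((v.2 : ℤ) + 1)) :=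
    mk_mem_diagKernel_sub (by exact_mod_cast ha) (by exact_mod_cast hb)
  exact uegPPos_edgeFinset_of_isEvenKernel _ (isEvenKernel_preimage_diagKernel hm hn hv) hv

/-- For `m, n ≥ 1`, `d = gcd(m+1, n+1)` and a vertex `v = (a,b)` of the
grid graph `G_{m×n}` (with `a = v.1.val + 1`, `b = v.2.val + 1`), if `d ∤ a` and `d ∤ b`,
then the UEG position `(G_{m×n}, v)` is a P-position. -/
theorem ueg_grid_ppos (m n : ℕ) (hm : 1 ≤ m) (hn : 1 ≤ n)
    (d : ℕ) (hd : d = Nat.gcd (m + 1) (n + 1)) (v : Fin m × Fin n)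
    (ha : ¬ d ∣ (v.1.val + 1)) (hb : ¬ d ∣ (v.2.val + 1)) :
    UegPPos (gridGraph m n).edgeFinset v :=
  ueg_grid_ppos_general m n d hd v ha hb
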